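/- arXiv:1006.1160 — 3 statements merged into one kernel-verified Lean document; each statement's English description precedes it below -/
import Mathlib

section
/- For every η ≥ 0, g(η) < 0, where g(η) = (1/η²)(1/cosh²η − tanh(η)/η) for η > 0 and g(0) = −2/3. -/
noncomputable def g (η : ℝ) : ℝ :=
  if η = 0 then -2/3 else (1/η^2) * (1/(Real.cosh η)^2 - Real.tanh η / η)

theorem g_neg : ∀ η : ℝ, 0 ≤ η → g η < 0 := by
  intro η hη
  unfold g
  rcases eq_or_lt_of_le hη with h | h
  · simp [← h]; norm_num
  · rw [if_neg (ne_of_gt h)]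
    have hc : 0 < Real.cosh η := Real.cosh_pos η
    have hkey : η < Real.sinh η * Real.cosh η := by
      have h2 : 2 * η < Real.sinh (2 * η) :=
        (Real.self_lt_sinh_iff).2 (by linarith)
      rw [Real.sinh_two_mul] at h2
      linarith
    have hneg : 1/(Real.cosh η)^2 - Real.tanh η / η < 0 := by
      rw [Real.tanh_eq_sinh_div_cosh, sub_neg, div_div, div_lt_div_iff₀ (by positivity) (by positivity)]
      ring_nf
      nlinarith [sq_nonneg (Real.cosh η)]
    have hpos : 0 < 1/η^2 := by positivity
    exact mul_neg_of_pos_of_neg hpos hneg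
end

section
/- The function g is differentiable on [0,∞) with g'(0) = 0, where g(η) = (1/η²)(1/cosh²η − tanh(η)/η) for η > 0 and g(0) = −2/3. -/
/-!
Writing `tanh = sinh / cosh` gives `g η = (2η - sinh 2η) / (2η³ cosh² η)` for `η ≠ 0`, and Taylor's
formula with integral remainder turns `(sinh 2η - 2η) / (4η³)` into `φ η = ∫₀¹ (1 - t)² cosh (2tη) dt`,
which also equals `1/3` at `η = 0`. Hence `g = -2 φ / cosh²` on all of `ℝ`; differentiating under the
integral sign shows `g` is differentiable everywhere, and since `g` is even, `g' 0 = 0`.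
-/

open Real Set Metric

theorem intervalIntegral.hasDerivAt_integral_of_continuous_deriv
    {E : Type*} [NormedAddCommGroup E] [NormedSpace ℝ E] {F F' : ℝ → ℝ → E}
    (hF : ∀ x, Continuous (F x)) (hF' : Continuous (Function.uncurry F'))
    (hderiv : ∀ x t, HasDerivAt (F · t) (F' x t) x) (a b x₀ : ℝ) :
    HasDerivAt (fun x => ∫ t in a..b, F x t) (∫ t in a..b, F' x₀ t) x₀ := by
  obtain ⟨C, hC⟩ := ((isCompact_closedBall x₀ 1).prod isCompact_uIcc).exists_bound_of_continuousOn
    hF'.continuousOn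
  refine (hasDerivAt_integral_of_dominated_loc_of_deriv_le (bound := fun _ => C)
    (ball_mem_nhds x₀ one_pos) (.of_forall fun x => (hF x).aestronglyMeasurable)
    ((hF x₀).intervalIntegrable _ _) (hF'.comp (.prodMk_right x₀)).aestronglyMeasurable
    (.of_forall fun t ht x hx => hC (x, t) ⟨ball_subset_closedBall hx, uIoc_subset_uIcc ht⟩)
    intervalIntegrable_const (.of_forall fun t _ x _ => hderiv x t)).2

theorem Function.Even.deriv_zero {𝕜 F : Type*} [NontriviallyNormedField 𝕜] [CharZero 𝕜]
    [NormedAddCommGroup F] [NormedSpace 𝕜 F] {f : 𝕜 → F} (hf : f.Even) : deriv f 0 = 0 := by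
  have h := deriv_comp_neg f (0 : 𝕜)
  rw [funext hf, neg_zero, eq_neg_iff_add_eq_zero, ← two_smul 𝕜] at h
  simpa using h

noncomputable def phi (η : ℝ) : ℝ := ∫ t in (0:ℝ)..1, (1 - t) ^ 2 * cosh (2 * t * η)

theorem differentiable_phi : Differentiable ℝ phi := fun η =>
  (intervalIntegral.hasDerivAt_integral_of_continuous_deriv
    (F := fun x t => (1 - t) ^ 2 * cosh (2 * t * x))
    (F' := fun x t => (1 - t) ^ 2 * (sinh (2 * t * x) * (2 * t))) (by fun_prop) (by fun_prop)
    (fun x t => by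
      simpa using (((hasDerivAt_id x).const_mul (2 * t)).cosh).const_mul ((1 - t) ^ 2)) 0 1 η).differentiableAt

theorem phi_zero : phi 0 = 1 / 3 := by
  norm_num [phi, intervalIntegral.integral_comp_sub_left (fun t : ℝ => t ^ 2)]

theorem phi_of_ne_zero {η : ℝ} (hη : η ≠ 0) :
    phi η = (sinh (2 * η) - 2 * η) / (4 * η ^ 3) := by
  have key : ∀ t ∈ uIcc (0:ℝ) 1, HasDerivAt
      (fun t => ((1 - t) ^ 2 / (2 * η) + 1 / (4 * η ^ 3)) * sinh (2 * t * η)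
        + (1 - t) / (2 * η ^ 2) * cosh (2 * t * η))
      ((1 - t) ^ 2 * cosh (2 * t * η)) t := by
    intro t _
    have hin : HasDerivAt (fun t : ℝ => 2 * t * η) (2 * η) t := by
      simpa using ((hasDerivAt_id t).const_mul 2).mul_const η
    have h1 : HasDerivAt (fun t : ℝ => 1 - t) (-1) t := by
      simpa using (hasDerivAt_id t).const_sub 1
    refine (((((h1.fun_pow 2).div_const (2 * η)).add_const (1 / (4 * η ^ 3))).fun_mul
      hin.sinh).fun_add ((h1.div_const (2 * η ^ 2)).fun_mul hin.cosh)).congr_deriv ?_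
    field_simp
    ring
  rw [phi, intervalIntegral.integral_eq_sub_of_hasDerivAt key
    (Continuous.intervalIntegrable (by fun_prop) _ _)]
  simp only [sub_self, sub_zero, mul_zero, zero_mul, mul_one, sinh_zero, cosh_zero]
  field_simp
  ring

theorem phi_even : phi.Even := fun η => by simp [phi]

theorem g_eq_phi_div_cosh_sq : g = fun η => -2 * phi η / cosh η ^ 2 := by
  funext η
  rcases eq_or_ne η 0 with rfl | hη
  · norm_num [g, phi_zero]
  · rw [g, if_neg hη, phi_of_ne_zero hη, tanh_eq_sinh_div_cosh, sinh_two_mul]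
    field_simp
    ring

theorem differentiable_g : Differentiable ℝ g := by
  rw [g_eq_phi_div_cosh_sq]
  exact fun η => (((differentiable_phi η).const_mul _).div
    ((differentiable_cosh η).pow 2) (pow_ne_zero 2 (cosh_pos η).ne'))

theorem g_even : g.Even := fun η => by
  rw [g_eq_phi_div_cosh_sq]
  simp only [phi_even η, cosh_neg]

theorem g_differentiable_on_Ici_and_deriv_zero :
    (∀ η ∈ Set.Ici (0:ℝ), DifferentiableWithinAt ℝ g (Set.Ici 0) η) ∧
      derivWithin g (Set.Ici 0) 0 = 0 :=
  ⟨fun η _ => (differentiable_g η).differentiableWithinAt,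
    by rw [(differentiable_g 0).derivWithin (uniqueDiffOn_Ici 0 0 self_mem_Ici), g_even.deriv_zero]⟩
end

section
/- Let F(T,Y) = ∫₀^{ℏω_D} tanh(√(ξ²+Y)/(2k_B T))/√(ξ²+Y) dξ − 1/(U₀N₀) for T > 0, Y ≥ 0. Then for fixed Y ≥ 0 (with Y > 0 if needed), the function T ↦ F(T,Y) is strictly decreasing on (0,∞), i.e., its partial derivative in T equals −(1/(2k_B T²))∫₀^{ℏω_D} dξ/cosh²(√(ξ²+Y)/(2k_B T)) < 0. -/
/-!
In the inverse temperature `β = (2 k_B T)⁻¹` the integrand is `tanh (β s) / s`, whose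
`β`-derivative `1 / cosh² (β s)` is bounded by `1`, while `|tanh (β s) / s| ≤ |β|` because
`|tanh x| ≤ |x|`. Hence one may differentiate under the integral sign, and the chain rule through
`T ↦ (2 k_B T)⁻¹` gives the `T`-derivative, which is negative since `1 / cosh²` is positive.
-/

open Real MeasureTheory Set intervalIntegral
open scoped Interval

namespace Real

theorem hasDerivAt_tanh (x : ℝ) : HasDerivAt tanh (1 / cosh x ^ 2) x := by
  rw [show tanh = sinh / cosh from funext tanh_eq_sinh_div_cosh]
  refine ((hasDerivAt_sinh x).div (hasDerivAt_cosh x) (cosh_pos x).ne').congr_deriv ?_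
  rw [← cosh_sq_sub_sinh_sq x]
  ring

@[fun_prop]
theorem continuous_tanh : Continuous tanh :=
  continuous_iff_continuousAt.2 fun x => (hasDerivAt_tanh x).continuousAt

@[fun_prop]
theorem measurable_tanh : Measurable tanh :=
  continuous_tanh.measurable

theorem norm_one_div_cosh_sq_le_one (x : ℝ) : ‖1 / cosh x ^ 2‖ ≤ 1 := by
  rw [norm_of_nonneg (by positivity)]
  exact div_le_one_of_le₀ (one_le_pow₀ (one_le_cosh x)) (by positivity)

theorem abs_tanh_le_abs (x : ℝ) : |tanh x| ≤ |x| := by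
  have h := convex_univ.norm_image_sub_le_of_norm_hasDerivWithin_le
    (fun y _ => (hasDerivAt_tanh y).hasDerivWithinAt)
    (fun y _ => norm_one_div_cosh_sq_le_one y)
    (mem_univ 0) (mem_univ x)
  simpa using h

end Real

theorem abs_tanh_mul_div_le (β s : ℝ) : |tanh (β * s) / s| ≤ |β| := by
  rcases eq_or_ne s 0 with rfl | hs
  · simp
  rw [abs_div, div_le_iff₀ (abs_pos.2 hs), ← abs_mul]
  exact abs_tanh_le_abs _

theorem hasDerivAt_tanh_mul_div {s : ℝ} (hs : s ≠ 0) (β : ℝ) :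
    HasDerivAt (fun β => tanh (β * s) / s) (1 / cosh (β * s) ^ 2) β := by
  have h := ((hasDerivAt_tanh (β * s)).comp β ((hasDerivAt_id' β).mul_const s)).div_const s
  refine h.congr_deriv ?_
  field_simp

theorem hasDerivAt_integral_tanh_mul_div {s : ℝ → ℝ} (hs : Measurable s) {a b : ℝ}
    (hs₀ : ∀ ξ ∈ Ι a b, s ξ ≠ 0) (β : ℝ) :
    HasDerivAt (fun β => ∫ ξ in a..b, tanh (β * s ξ) / s ξ)
      (∫ ξ in a..b, 1 / cosh (β * s ξ) ^ 2) β := by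
  have hF_meas (β : ℝ) : AEStronglyMeasurable (fun ξ => tanh (β * s ξ) / s ξ)
      (volume.restrict (Ι a b)) :=
    Measurable.aestronglyMeasurable (by fun_prop)
  refine (hasDerivAt_integral_of_dominated_loc_of_deriv_le (bound := fun _ => 1)
    (F' := fun β ξ => 1 / cosh (β * s ξ) ^ 2)
    Filter.univ_mem (.of_forall hF_meas) ?_ (Measurable.aestronglyMeasurable (by fun_prop)) ?_
    intervalIntegrable_const ?_).2
  · exact intervalIntegrable_const.mono_fun' (hF_meas β)
      (.of_forall fun ξ => abs_tanh_mul_div_le β (s ξ))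
  · exact .of_forall fun _ _ _ _ => norm_one_div_cosh_sq_le_one _
  · exact .of_forall fun ξ hξ β' _ => hasDerivAt_tanh_mul_div (hs₀ ξ hξ) β'

theorem hasDerivAt_integral_tanh_div_mul {s : ℝ → ℝ} (hs : Measurable s) {a b : ℝ}
    (hs₀ : ∀ ξ ∈ Ι a b, s ξ ≠ 0) {c T : ℝ} (hc : c ≠ 0) (hT : T ≠ 0) :
    HasDerivAt (fun T => ∫ ξ in a..b, tanh (s ξ / (c * T)) / s ξ)
      (-(1 / (c * T ^ 2)) * ∫ ξ in a..b, 1 / cosh (s ξ / (c * T)) ^ 2) T := by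
  have hβ : HasDerivAt (fun T => (c * T)⁻¹) (-(1 / (c * T ^ 2))) T := by
    refine (((hasDerivAt_id' T).const_mul c).inv (mul_ne_zero hc hT)).congr_deriv ?_
    field_simp
  have h := (hasDerivAt_integral_tanh_mul_div hs hs₀ (c * T)⁻¹).comp T hβ
  rw [mul_comm]
  simpa only [Function.comp_def, inv_mul_eq_div] using h

theorem integral_one_div_cosh_sq_pos {f : ℝ → ℝ} (hf : Measurable f) {a b : ℝ}
    (hab : a < b) :
    0 < ∫ ξ in a..b, 1 / cosh (f ξ) ^ 2 := by
  refine intervalIntegral_pos_of_pos ?_ (fun ξ => by positivity) hab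
  exact (intervalIntegrable_const (c := (1:ℝ))).mono_fun'
    (Measurable.aestronglyMeasurable (by fun_prop))
    (.of_forall fun _ => norm_one_div_cosh_sq_le_one _)

theorem F_strictAnti_in_T_general (kB ω U₀ N₀ : ℝ) (hkB : 0 < kB) (hω : 0 < ω)
    (Y : ℝ) (hY : 0 ≤ Y) :
    StrictAntiOn
      (fun T : ℝ => (∫ ξ in (0:ℝ)..ω,
        Real.tanh (Real.sqrt (ξ^2 + Y) / (2 * kB * T)) / Real.sqrt (ξ^2 + Y))
        - 1 / (U₀ * N₀)) (Set.Ioi 0) ∧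
    ∀ T : ℝ, 0 < T →
      HasDerivAt
        (fun T : ℝ => (∫ ξ in (0:ℝ)..ω,
          Real.tanh (Real.sqrt (ξ^2 + Y) / (2 * kB * T)) / Real.sqrt (ξ^2 + Y))
          - 1 / (U₀ * N₀))
        (-(1 / (2 * kB * T^2)) *
          ∫ ξ in (0:ℝ)..ω, 1 / (Real.cosh (Real.sqrt (ξ^2 + Y) / (2 * kB * T)))^2) T ∧
      -(1 / (2 * kB * T^2)) *
          (∫ ξ in (0:ℝ)..ω, 1 / (Real.cosh (Real.sqrt (ξ^2 + Y) / (2 * kB * T)))^2) < 0 := by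
  have hs₀ : ∀ ξ ∈ Ι 0 ω, √(ξ ^ 2 + Y) ≠ 0 := fun ξ hξ => by
    have hξ : 0 < ξ := (uIoc_of_le hω.le ▸ hξ).1
    positivity
  have hderiv (T : ℝ) (hT : 0 < T) :=
    (hasDerivAt_integral_tanh_div_mul (by fun_prop) hs₀ (by positivity : 2 * kB ≠ 0)
      hT.ne').sub_const (1 / (U₀ * N₀))
  have hneg (T : ℝ) (hT : 0 < T) :
      -(1 / (2 * kB * T ^ 2)) *
        (∫ ξ in (0:ℝ)..ω, 1 / cosh (√(ξ ^ 2 + Y) / (2 * kB * T)) ^ 2) < 0 :=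
    mul_neg_of_neg_of_pos (neg_neg_of_pos (by positivity))
      (integral_one_div_cosh_sq_pos (by fun_prop) hω)
  refine ⟨strictAntiOn_of_deriv_neg (convex_Ioi 0)
    (fun T hT => (hderiv T hT).continuousAt.continuousWithinAt) fun T hT => ?_,
    fun T hT => ⟨hderiv T hT, hneg T hT⟩⟩
  rw [interior_Ioi] at hT
  rw [(hderiv T hT).deriv]
  exact hneg T hT

theorem F_strictAnti_in_T (kB ω U₀ N₀ : ℝ) (hkB : 0 < kB) (hω : 0 < ω)
    (hU : 0 < U₀) (hN : 0 < N₀) (Y : ℝ) (hY : 0 ≤ Y) :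
    StrictAntiOn
      (fun T : ℝ => (∫ ξ in (0:ℝ)..ω,
        Real.tanh (Real.sqrt (ξ^2 + Y) / (2 * kB * T)) / Real.sqrt (ξ^2 + Y))
        - 1 / (U₀ * N₀)) (Set.Ioi 0) ∧
    ∀ T : ℝ, 0 < T →
      HasDerivAt
        (fun T : ℝ => (∫ ξ in (0:ℝ)..ω,
          Real.tanh (Real.sqrt (ξ^2 + Y) / (2 * kB * T)) / Real.sqrt (ξ^2 + Y))
          - 1 / (U₀ * N₀))
        (-(1 / (2 * kB * T^2)) *
          ∫ ξ in (0:ℝ)..ω, 1 / (Real.cosh (Real.sqrt (ξ^2 + Y) / (2 * kB * T)))^2) T ∧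
      -(1 / (2 * kB * T^2)) *
          (∫ ξ in (0:ℝ)..ω, 1 / (Real.cosh (Real.sqrt (ξ^2 + Y) / (2 * kB * T)))^2) < 0 :=
  F_strictAnti_in_T_general kB ω U₀ N₀ hkB hω Y hY
end
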